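/- Let G = (V,E) be a connected weighted graph with n ≥ B+2 vertices. Define a sequence c_1, ..., c_{B+1} greedily: c_1 is arbitrary, and for i ≥ 2, c_i maximizes dist_G(c_i, {c_1,...,c_{i-1}}). Let C = {c_1,...,c_{B+1}}. Then for every vertex v of G, dist_G(v, C) ≤ D^B_opt, where D^B_opt is the minimum diameter over all B-augmentations of G. -/

import Mathlib

open scoped ENNReal

/-!
Let `r` be the distance from `v` to the centers. By the greedy choice, `v, c₁, …, c_{B+1}` are
`B + 2` points pairwise at distance at least `r`. The distance of a `B`-augmentation is bounded
below by the pseudometric obtained from `dist_G` by gluing the endpoints of each new edge, i.e.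
adding shortcuts of length `0`. Gluing `a` to `b` brings far points `p, q` closer than `r` only
via `d(p, a) + d(b, q) < r`; two such pairs `(p, q)`, `(p', q')` with `p ≠ p'` and `q ≠ q'` would
give `d(p, p') + d(q, q') < 2r`, so the pairs not covered yet form a star. Hence after gluing `B`
pairs the close pairs have a vertex cover of size `B`, two of the `B + 2` points remain at
distance at least `r`, and the diameter is at least `r`.
-/

noncomputable def walkWeight {V : Type*} {G : SimpleGraph V} (w : V → V → ℝ≥0∞) {u v : V}
    (p : G.Walk u v) : ℝ≥0∞ :=
  (p.darts.map fun d => w d.toProd.1 d.toProd.2).sum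

noncomputable def wdist {V : Type*} (G : SimpleGraph V) (w : V → V → ℝ≥0∞) (u v : V) : ℝ≥0∞ :=
  ⨅ p : G.Walk u v, walkWeight w p

noncomputable def wdiam {V : Type*} (G : SimpleGraph V) (w : V → V → ℝ≥0∞) : ℝ≥0∞ :=
  ⨆ x, ⨆ y, wdist G w x y

def IsAug {V : Type*} (G : SimpleGraph V) (cst : Sym2 V → ℕ) (B : ℕ)
    (G' : SimpleGraph V) : Prop :=
  ∃ F : Finset (Sym2 V), (∀ e ∈ F, e ∉ G.edgeSet ∧ ¬ e.IsDiag) ∧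
    (∑ e ∈ F, cst e) ≤ B ∧ G' = G ⊔ SimpleGraph.fromEdgeSet ↑F

section Glue

variable {V : Type*}

structure IsPseudoEMetric (d : V → V → ℝ≥0∞) : Prop where
  self : ∀ x, d x x = 0
  symm : ∀ x y, d x y = d y x
  triangle : ∀ x y z, d x z ≤ d x y + d y z

noncomputable def glue (d : V → V → ℝ≥0∞) (a b : V) : V → V → ℝ≥0∞ := fun u v =>
  min (d u v) (min (d u a + d b v) (d u b + d a v))

lemma glue_comm (d : V → V → ℝ≥0∞) (a b : V) : glue d a b = glue d b a := by
  funext u v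
  simp only [glue, min_comm (d u a + d b v)]

noncomputable def glueList (d : V → V → ℝ≥0∞) : List (Sym2 V) → V → V → ℝ≥0∞
  | [] => d
  | e :: L => Sym2.lift ⟨glue (glueList d L), glue_comm _⟩ e

@[simp]
lemma glueList_cons (d : V → V → ℝ≥0∞) (a b : V) (L : List (Sym2 V)) :
    glueList d (s(a, b) :: L) = glue (glueList d L) a b := rfl

variable {d : V → V → ℝ≥0∞}

lemma glue_le (a b u v : V) : glue d a b u v ≤ d u v := min_le_left _ _

lemma glue_le_left (a b u v : V) : glue d a b u v ≤ d u a + d b v :=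
  (min_le_right _ _).trans (min_le_left _ _)

lemma glue_le_right (a b u v : V) : glue d a b u v ≤ d u b + d a v :=
  (min_le_right _ _).trans (min_le_right _ _)

lemma glue_eq_or (a b u v : V) :
    glue d a b u v = d u v ∨ glue d a b u v = d u a + d b v ∨
      glue d a b u v = d u b + d a v := by
  unfold glue
  rcases min_choice (d u v) (min (d u a + d b v) (d u b + d a v)) with h | h
  · exact Or.inl h
  · rw [h]; exact Or.inr (min_choice _ _)

lemma IsPseudoEMetric.glue (hd : IsPseudoEMetric d) (a b : V) :
    IsPseudoEMetric (glue d a b) where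
  self x := le_antisymm ((glue_le a b x x).trans_eq (hd.self x)) zero_le
  symm x y := by
    unfold _root_.glue
    rw [hd.symm x y, hd.symm x a, hd.symm x b, hd.symm a y, hd.symm b y, add_comm (d a x),
      add_comm (d b x), min_comm (d y b + d a x)]
  triangle u y v := by
    have drop {p q s t : ℝ≥0∞} : p + t ≤ p + q + (s + t) := add_le_add le_self_add le_add_self
    rcases glue_eq_or (d := d) a b u y with h₁ | h₁ | h₁ <;>
      rcases glue_eq_or (d := d) a b y v with h₂ | h₂ | h₂ <;> rw [h₁, h₂]
    · exact (glue_le a b u v).trans (hd.triangle u y v)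
    · exact (glue_le_left a b u v).trans (by rw [← add_assoc]; gcongr; exact hd.triangle u y a)
    · exact (glue_le_right a b u v).trans (by rw [← add_assoc]; gcongr; exact hd.triangle u y b)
    · exact (glue_le_left a b u v).trans (by rw [add_assoc]; gcongr; exact hd.triangle b y v)
    · exact (glue_le_left a b u v).trans drop
    · exact (glue_le a b u v).trans ((hd.triangle u a v).trans drop)
    · exact (glue_le_right a b u v).trans (by rw [add_assoc]; gcongr; exact hd.triangle a y v)
    · exact (glue_le a b u v).trans ((hd.triangle u b v).trans drop)
    · exact (glue_le_right a b u v).trans drop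

lemma IsPseudoEMetric.glueList (hd : IsPseudoEMetric d) (L : List (Sym2 V)) :
    IsPseudoEMetric (glueList d L) := by
  induction L with
  | nil => exact hd
  | cons e L ih => induction e using Sym2.ind with | _ a b => exact ih.glue a b

lemma glueList_le (L : List (Sym2 V)) (u v : V) : glueList d L u v ≤ d u v := by
  induction L with
  | nil => exact le_rfl
  | cons e L ih =>
    induction e using Sym2.ind with | _ a b => exact (glue_le a b u v).trans ih

lemma glueList_eq_zero_of_mem (hd : IsPseudoEMetric d) {L : List (Sym2 V)} {a b : V}
    (h : s(a, b) ∈ L) : glueList d L a b = 0 := by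
  induction L with
  | nil => exact absurd h List.not_mem_nil
  | cons e L ih =>
    induction e using Sym2.ind with | _ a' b' =>
    rcases List.mem_cons.mp h with h | h
    · have hL := hd.glueList L
      rw [glueList_cons]
      rcases Sym2.eq_iff.mp h with ⟨rfl, rfl⟩ | ⟨rfl, rfl⟩
      · exact le_antisymm ((glue_le_left a b a b).trans_eq (by simp [hL.self])) zero_le
      · exact le_antisymm ((glue_le_right b a a b).trans_eq (by simp [hL.self])) zero_le
    · exact le_antisymm ((glue_le a' b' a b).trans_eq (ih h)) zero_le

lemma glue_lt_iff (hsymm : ∀ x y, d x y = d y x) {r : ℝ≥0∞} (a b u v : V) :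
    glue d a b u v < r ↔ d u v < r ∨ d u a + d b v < r ∨ d v a + d b u < r := by
  rw [hsymm v a, hsymm b u, add_comm (d a v)]
  simp only [glue, min_lt_iff]

lemma IsPseudoEMetric.lt_or_lt_of_add_lt (hd : IsPseudoEMetric d) {r : ℝ≥0∞} {a b u v u' v' : V}
    (h : d u a + d b v < r) (h' : d u' a + d b v' < r) : d u u' < r ∨ d v v' < r := by
  by_contra! hfar
  have : r + r < r + r := calc
    r + r ≤ d u u' + d v v' := add_le_add hfar.1 hfar.2
    _ ≤ (d u a + d a u') + (d v b + d b v') := add_le_add (hd.triangle u a u') (hd.triangle v b v')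
    _ = (d u a + d b v) + (d u' a + d b v') := by rw [hd.symm a u', hd.symm v b]; ring
    _ < r + r := ENNReal.add_lt_add h h'
  exact lt_irrefl _ this

end Glue

lemma exists_card_le_one_cover_of_forall_eq_or_eq {ι : Type*} (R : ι → ι → Prop)
    (hR : ∀ i j p q, R i j → R p q → i = p ∨ j = q) :
    ∃ Y : Finset ι, Y.card ≤ 1 ∧ ∀ i j, R i j → i ∈ Y ∨ j ∈ Y := by
  by_cases hne : ∃ i j, R i j
  swap
  · push Not at hne
    exact ⟨∅, by simp, fun i j h => absurd h (hne i j)⟩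
  obtain ⟨i₀, j₀, h₀⟩ := hne
  by_cases hstar : ∀ p q, R p q → p = i₀
  · exact ⟨{i₀}, by simp, fun p q h => Or.inl (by simp [hstar p q h])⟩
  push Not at hstar
  obtain ⟨p, q, hpq, hp⟩ := hstar
  have hq : q = j₀ := (hR _ _ _ _ hpq h₀).resolve_left hp
  refine ⟨{j₀}, by simp, fun s t hst => Or.inr ?_⟩
  rcases hR _ _ _ _ hst h₀ with rfl | h
  · simpa [hq] using (hR _ _ _ _ hst hpq).resolve_left (Ne.symm hp)
  · simp [h]

section Cover

variable {V ι : Type*} {d : V → V → ℝ≥0∞} {r : ℝ≥0∞} {x : ι → V}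

lemma exists_cover_glueList [DecidableEq ι] (hd : IsPseudoEMetric d)
    (hx : ∀ i j, i ≠ j → r ≤ d (x i) (x j)) (L : List (Sym2 V)) :
    ∃ Z : Finset ι, Z.card ≤ L.length ∧
      ∀ i j, i ≠ j → glueList d L (x i) (x j) < r → i ∈ Z ∨ j ∈ Z := by
  induction L with
  | nil => exact ⟨∅, le_rfl, fun i j hij h => absurd (hx i j hij) h.not_ge⟩
  | cons e L ih =>
    induction e using Sym2.ind with | _ a b =>
    obtain ⟨Z, hZ, hcover⟩ := ih
    set d' := glueList d L
    have hd' : IsPseudoEMetric d' := hd.glueList L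
    have hfar : ∀ i j, i ∉ Z → j ∉ Z → i ≠ j → r ≤ d' (x i) (x j) := fun i j hi hj hij =>
      not_lt.mp fun h => (hcover i j hij h).elim hi hj
    obtain ⟨Y, hY, hstar⟩ := exists_card_le_one_cover_of_forall_eq_or_eq
      (fun i j => i ∉ Z ∧ j ∉ Z ∧ d' (x i) a + d' b (x j) < r) (by
        rintro i j p q ⟨hi, hj, hij⟩ ⟨hp, hq, hpq⟩
        by_contra! hne
        rcases hd'.lt_or_lt_of_add_lt hij hpq with h | h
        · exact (hfar i p hi hp hne.1).not_gt h
        · exact (hfar j q hj hq hne.2).not_gt h)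
    have hshortcut : ∀ i j, d' (x i) a + d' b (x j) < r → i ∈ Z ∪ Y ∨ j ∈ Z ∪ Y := by
      intro i j h
      by_cases hi : i ∈ Z
      · simp [hi]
      by_cases hj : j ∈ Z
      · simp [hj]
      exact (hstar i j ⟨hi, hj, h⟩).imp (Finset.mem_union_right Z) (Finset.mem_union_right Z)
    refine ⟨Z ∪ Y, (Finset.card_union_le Z Y).trans (by simp only [List.length_cons]; omega),
      fun i j hij hlt => ?_⟩
    rw [glueList_cons, glue_lt_iff hd'.symm] at hlt
    rcases hlt with h | h | h
    · exact (hcover i j hij h).imp (Finset.mem_union_left Y) (Finset.mem_union_left Y)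
    · exact hshortcut i j h
    · exact (hshortcut j i h).symm

lemma exists_far_pair_glueList [Fintype ι] (hd : IsPseudoEMetric d)
    (hx : ∀ i j, i ≠ j → r ≤ d (x i) (x j)) {L : List (Sym2 V)}
    (hL : L.length + 2 ≤ Fintype.card ι) :
    ∃ i j, i ≠ j ∧ r ≤ glueList d L (x i) (x j) := by
  classical
  obtain ⟨Z, hZ, hcover⟩ := exists_cover_glueList hd hx L
  have : 1 < Zᶜ.card := by rw [Finset.card_compl]; omega
  obtain ⟨i, hi, j, hj, hij⟩ := Finset.one_lt_card.mp this
  refine ⟨i, j, hij, not_lt.mp fun h => ?_⟩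
  rcases hcover i j hij h with h | h
  · exact Finset.mem_compl.mp hi h
  · exact Finset.mem_compl.mp hj h

end Cover

section WalkDistance

variable {V : Type*} {G : SimpleGraph V} {w : V → V → ℝ≥0∞}

lemma walkWeight_cons {u v y : V} (h : G.Adj u y) (p : G.Walk y v) :
    walkWeight w (SimpleGraph.Walk.cons h p) = w u y + walkWeight w p := by
  simp [walkWeight]

lemma walkWeight_append {u v y : V} (p : G.Walk u y) (q : G.Walk y v) :
    walkWeight w (p.append q) = walkWeight w p + walkWeight w q := by
  simp [walkWeight, SimpleGraph.Walk.darts_append]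

lemma walkWeight_reverse (hw : ∀ x y, w x y = w y x) {u v : V} (p : G.Walk u v) :
    walkWeight w p.reverse = walkWeight w p := by
  unfold walkWeight
  rw [SimpleGraph.Walk.darts_reverse, List.map_reverse, List.sum_reverse, List.map_map]
  congr 1
  exact List.map_congr_left fun d _ => by simp [hw d.toProd.1 d.toProd.2]

lemma isPseudoEMetric_wdist (hw : ∀ x y, w x y = w y x) : IsPseudoEMetric (wdist G w) where
  self u := le_antisymm (iInf_le_of_le SimpleGraph.Walk.nil (by simp [walkWeight])) zero_le
  symm u v := le_antisymm
    (le_iInf fun q => iInf_le_of_le q.reverse (walkWeight_reverse hw q).le)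
    (le_iInf fun q => iInf_le_of_le q.reverse (walkWeight_reverse hw q).le)
  triangle u y v := by
    simp only [wdist, ENNReal.iInf_add, ENNReal.add_iInf]
    exact le_iInf fun q => le_iInf fun p => iInf_le_of_le (p.append q) (walkWeight_append p q).le

lemma wdist_le_of_adj {u v : V} (h : G.Adj u v) : wdist G w u v ≤ w u v :=
  iInf_le_of_le (SimpleGraph.Walk.cons h SimpleGraph.Walk.nil) (by simp [walkWeight])

lemma le_wdist_of_forall_adj_le {δ : V → V → ℝ≥0∞} (hδ : IsPseudoEMetric δ)
    (h : ∀ a b, G.Adj a b → δ a b ≤ w a b) (u v : V) : δ u v ≤ wdist G w u v := by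
  refine le_iInf fun p => ?_
  induction p with
  | nil => exact (hδ.self _).trans_le zero_le
  | cons hadj p ih =>
    rw [walkWeight_cons]
    exact (hδ.triangle _ _ _).trans (add_le_add (h _ _ hadj) ih)

end WalkDistance

lemma pairwise_le_of_greedy {V : Type*} {n : ℕ} {d : V → V → ℝ≥0∞}
    (hsymm : ∀ x y, d x y = d y x)
    {c : Fin n → V}
    (hgreedy : ∀ i : Fin n, ∀ v : V,
      (⨅ (j : Fin n) (_ : j < i), d v (c j)) ≤ ⨅ (j : Fin n) (_ : j < i), d (c i) (c j))
    (v : V) (i j : Fin (n + 1)) (hij : i ≠ j) :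
    (⨅ k, d v (c k)) ≤ d (Matrix.vecCons v c i) (Matrix.vecCons v c j) := by
  have hlt : ∀ i j : Fin (n + 1), i < j →
      (⨅ k, d v (c k)) ≤ d (Matrix.vecCons v c i) (Matrix.vecCons v c j) := by
    intro i j hij
    cases j using Fin.cases with
    | zero => exact absurd hij (Fin.not_lt_zero i)
    | succ l =>
      cases i using Fin.cases with
      | zero => simpa using iInf_le _ l
      | succ k =>
        rw [Matrix.cons_val_succ, Matrix.cons_val_succ, hsymm]
        exact (le_iInf₂ fun j _ => iInf_le _ j).trans
          ((hgreedy l v).trans (iInf_le_of_le k (iInf_le _ (Fin.succ_lt_succ_iff.mp hij))))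
  rcases hij.lt_or_gt with h | h
  · exact hlt i j h
  · rw [hsymm]
    exact hlt j i h

theorem stmt3_general {V : Type*} [Fintype V] (G : SimpleGraph V)
    (w : V → V → ℝ≥0∞) (hw : ∀ x y, w x y = w y x)
    (cst : Sym2 V → ℕ) (hcst : ∀ e, 1 ≤ cst e) (B : ℕ)
    (ctr : Fin (B + 1) → V)
    (hgreedy : ∀ i : Fin (B + 1), ∀ v : V,
      (⨅ (j : Fin (B + 1)) (_ : j < i), wdist G w v (ctr j)) ≤
        ⨅ (j : Fin (B + 1)) (_ : j < i), wdist G w (ctr i) (ctr j)) :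
    ∀ v : V, (⨅ i : Fin (B + 1), wdist G w v (ctr i)) ≤
      ⨅ (G' : SimpleGraph V) (_ : IsAug G cst B G'), wdiam G' w := by
  intro v
  refine le_iInf₂ fun G' ⟨F, _, hcost, hG'⟩ => ?_
  subst hG'
  have hd := isPseudoEMetric_wdist (G := G) hw
  have hcard : F.card ≤ B :=
    (Finset.card_eq_sum_ones F).trans_le ((Finset.sum_le_sum fun e _ => hcst e).trans hcost)
  obtain ⟨i, j, -, hfar⟩ := exists_far_pair_glueList hd (pairwise_le_of_greedy hd.symm hgreedy v)
    (L := F.toList) (by simpa using hcard)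
  refine hfar.trans ((le_wdist_of_forall_adj_le (hd.glueList _) (fun a b hab => ?_) _ _).trans
    (le_iSup₂ (f := fun a b => wdist _ w a b) _ _))
  rcases hab with hab | hab
  · exact (glueList_le _ a b).trans (wdist_le_of_adj hab)
  · rw [SimpleGraph.fromEdgeSet_adj] at hab
    exact (glueList_eq_zero_of_mem hd (Finset.mem_toList.mpr hab.1)).trans_le zero_le

/-- Greedy farthest-point clustering: `ctr 0` is arbitrary and each `ctr i` maximizes the
distance to the previously chosen centers. Then every vertex is within distance
`D^B_opt` (the optimal diameter of a `B`-augmentation) of some center. -/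
theorem stmt3 {V : Type*} [Fintype V] (G : SimpleGraph V) (hconn : G.Connected)
    (w : V → V → ℝ≥0∞) (hw : ∀ x y, w x y = w y x)
    (cst : Sym2 V → ℕ) (hcst : ∀ e, 1 ≤ cst e) (B : ℕ)
    (hn : B + 2 ≤ Fintype.card V)
    (ctr : Fin (B + 1) → V)
    (hgreedy : ∀ i : Fin (B + 1), ∀ v : V,
      (⨅ (j : Fin (B + 1)) (_ : j < i), wdist G w v (ctr j)) ≤
        ⨅ (j : Fin (B + 1)) (_ : j < i), wdist G w (ctr i) (ctr j)) :
    ∀ v : V, (⨅ i : Fin (B + 1), wdist G w v (ctr i)) ≤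
      ⨅ (G' : SimpleGraph V) (_ : IsAug G cst B G'), wdiam G' w :=
  stmt3_general G w hw cst hcst B ctr hgreedy
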